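/- arXiv:1612.07099 — 2 statements merged into one kernel-verified Lean document; each statement's English description precedes it below -/
import Mathlib

section
/- Let $H$ be a separable Hilbert space and $(f_n)$ a sequence of functions $f_n:[T_1,T_1']\to H^*$ (identified with $H$) such that $\sup_n\sup_t \|f_n(t)\|\le M_0$ and, for each fixed $\xi$ in a countable dense subset $X_0$ of $H$, the real functions $t\mapsto \langle f_n(t),\xi\rangle$ have total variation on $[T_1,T_1']$ uniformly bounded in $n$. Then there is a subsequence $(f_{n_k})$ and a function $f:[T_1,T_1']\to H$ with $\sup_t\|f(t)\|\le M_0$ such that $\langle f_{n_k}(t),\xi\rangle \to \langle f(t),\xi\rangle$ for every $t\in[T_1,T_1']$ and every $\xi\in H$ (i.e. pointwise-in-time weak convergence). -/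
open Set

open Filter

lemma diag_nat (P : ℕ → (ℕ → ℕ) → Prop)
    (hsub : ∀ m (φ ψ : ℕ → ℕ), StrictMono ψ → P m φ → P m (fun k => φ (ψ k)))
    (htail : ∀ m (φ : ℕ → ℕ) (N : ℕ), P m (fun k => φ (k + N)) → P m φ)
    (hex : ∀ φ : ℕ → ℕ, StrictMono φ → ∀ m, ∃ ψ, StrictMono ψ ∧ P m (fun k => φ (ψ k))) :
    ∃ φ, StrictMono φ ∧ ∀ m, P m φ := by
  choose Ψ hΨmono hΨP using hex
  let F : ℕ → {f : ℕ → ℕ // StrictMono f} :=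
    fun m => Nat.rec ⟨id, strictMono_id⟩
      (fun m p => ⟨fun k => p.1 (Ψ p.1 p.2 m k), p.2.comp (hΨmono p.1 p.2 m)⟩) m
  have hFsucc : ∀ m, (F (m+1)).1 = fun k => (F m).1 (Ψ (F m).1 (F m).2 m k) := fun m => rfl
  set d : ℕ → ℕ := fun k => (F k).1 k with hd
  have hdmono : StrictMono d := by
    apply strictMono_nat_of_lt_succ
    intro k
    have h1 : d (k+1) = (F k).1 (Ψ (F k).1 (F k).2 k (k+1)) := rfl
    have h2 : (k+1) ≤ Ψ (F k).1 (F k).2 k (k+1) := (hΨmono (F k).1 (F k).2 k).le_apply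
    calc d k = (F k).1 k := rfl
    _ < (F k).1 (k+1) := (F k).2 (Nat.lt_succ_self k)
    _ ≤ (F k).1 (Ψ (F k).1 (F k).2 k (k+1)) := (F k).2.monotone h2
    _ = d (k+1) := rfl
  refine ⟨d, hdmono, ?_⟩
  intro m
  set M := m + 1 with hM
  -- E j : reindexing with (F (M + j)).1 = (F M).1 ∘ E j
  let E : ℕ → (ℕ → ℕ) := fun j => Nat.rec id
    (fun j e => fun k => e (Ψ (F (M+j)).1 (F (M+j)).2 (M+j) k)) j
  have hEmono : ∀ j, StrictMono (E j) := by
    intro j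
    induction j with
    | zero => exact strictMono_id
    | succ j ih => exact ih.comp (hΨmono (F (M+j)).1 (F (M+j)).2 (M+j))
  have hE2 : ∀ j k, (F (M+j)).1 k = (F M).1 (E j k) := by
    intro j
    induction j with
    | zero => intro k; rfl
    | succ j ih =>
      intro k
      have : (F (M+(j+1))).1 k = (F (M+j)).1 (Ψ (F (M+j)).1 (F (M+j)).2 (M+j) k) := rfl
      rw [this, ih]
  set e : ℕ → ℕ := fun k => E k (M + k) with he
  have hemono : StrictMono e := by
    apply strictMono_nat_of_lt_succ
    intro k
    have h2 : (M+k+1) ≤ Ψ (F (M+k)).1 (F (M+k)).2 (M+k) (M+k+1) :=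
      (hΨmono (F (M+k)).1 (F (M+k)).2 (M+k)).le_apply
    calc e k = E k (M+k) := rfl
    _ < E k (M+k+1) := (hEmono k) (Nat.lt_succ_self _)
    _ ≤ E k (Ψ (F (M+k)).1 (F (M+k)).2 (M+k) (M+k+1)) := (hEmono k).monotone h2
    _ = e (k+1) := rfl
  have hPM : P m (F M).1 := hΨP (F m).1 (F m).2 m
  have hPe : P m (fun k => (F M).1 (e k)) := hsub m (F M).1 e hemono hPM
  have heq : (fun k => (F M).1 (e k)) = (fun k => d (k + M)) := by
    funext k
    have : d (k + M) = (F (M + k)).1 (M + k) := by rw [Nat.add_comm k M]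
    rw [this, hE2 k (M+k)]
  rw [heq] at hPe
  exact htail m d M hPe

lemma diag_countable {α : Type*} {D : Set α} (hD : D.Countable)
    (P : α → (ℕ → ℕ) → Prop)
    (hsub : ∀ x (φ ψ : ℕ → ℕ), StrictMono ψ → P x φ → P x (fun k => φ (ψ k)))
    (htail : ∀ x (φ : ℕ → ℕ) (N : ℕ), P x (fun k => φ (k + N)) → P x φ)
    (hex : ∀ φ : ℕ → ℕ, StrictMono φ → ∀ x ∈ D, ∃ ψ, StrictMono ψ ∧ P x (fun k => φ (ψ k))) :
    ∃ φ, StrictMono φ ∧ ∀ x ∈ D, P x φ := by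
  rcases D.eq_empty_or_nonempty with h | h
  · exact ⟨id, strictMono_id, by simp [h]⟩
  · obtain ⟨u, hu⟩ := (Set.countable_iff_exists_surjective h).1 hD
    obtain ⟨φ, hφ, hP⟩ := diag_nat (fun m ψ => P (u m) ψ)
      (fun m => hsub (u m)) (fun m => htail (u m))
      (fun ψ hψ m => hex ψ hψ (u m) (u m).2)
    refine ⟨φ, hφ, fun x hx => ?_⟩
    obtain ⟨m, hm⟩ := hu ⟨x, hx⟩
    have := hP m
    rwa [hm] at this

lemma helly_mono {a b B : ℝ} (g : ℕ → ℝ → ℝ)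
    (hmono : ∀ n, MonotoneOn (g n) (Icc a b))
    (hb : ∀ n, ∀ t ∈ Icc a b, |g n t| ≤ B) :
    ∃ φ : ℕ → ℕ, StrictMono φ ∧ ∀ t ∈ Icc a b,
      ∃ l : ℝ, Tendsto (fun k => g (φ k) t) atTop (nhds l) := by
  rcases le_or_gt a b with hab | hab
  swap
  · exact ⟨id, strictMono_id, fun t ht => absurd (ht.1.trans ht.2) (not_le.2 hab)⟩
  set P : ℝ → (ℕ → ℕ) → Prop :=
    fun x φ => ∃ l : ℝ, Tendsto (fun k => g (φ k) x) atTop (nhds l) with hPdef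
  have hsub : ∀ x (φ ψ : ℕ → ℕ), StrictMono ψ → P x φ → P x (fun k => φ (ψ k)) :=
    fun x φ ψ hψ ⟨l, hl⟩ => ⟨l, hl.comp hψ.tendsto_atTop⟩
  have htail : ∀ x (φ : ℕ → ℕ) (N : ℕ), P x (fun k => φ (k + N)) → P x φ :=
    fun x φ N ⟨l, hl⟩ => ⟨l, (tendsto_add_atTop_iff_nat N).1 hl⟩
  have hex : ∀ (E : Set ℝ), E ⊆ Icc a b → ∀ φ : ℕ → ℕ, StrictMono φ → ∀ x ∈ E,
      ∃ ψ, StrictMono ψ ∧ P x (fun k => φ (ψ k)) := by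
    intro E hE φ hφ x hx
    obtain ⟨l, _, ψ, hψ, hl⟩ := tendsto_subseq_of_bounded (Metric.isBounded_Icc (-B) B)
      (x := fun k => g (φ k) x) (fun k => Set.mem_Icc.mpr (abs_le.1 (hb (φ k) x (hE hx))))
    exact ⟨ψ, hψ, l, hl⟩
  -- countable dense set D
  set D : Set ℝ := (Icc a b ∩ Set.range ((↑) : ℚ → ℝ)) ∪ {a, b} with hDdef
  have hDc : D.Countable := by
    apply Set.Countable.union
    · exact (Set.countable_range _).mono inter_subset_right
    · exact ((Set.finite_singleton b).insert a).countable
  have hDsub : D ⊆ Icc a b := by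
    intro x hx
    rcases hx with hx | hx
    · exact hx.1
    · rcases hx with rfl | hx
      · exact ⟨le_refl _, hab⟩
      · rw [Set.mem_singleton_iff] at hx; subst hx; exact ⟨hab, le_refl _⟩
  have haD : a ∈ D := Or.inr (Or.inl rfl)
  have hbD : b ∈ D := Or.inr (Or.inr rfl)
  -- Step 1: subsequence converging on D
  obtain ⟨φ₁, hφ₁, hconv⟩ := diag_countable hDc P hsub htail (fun φ hφ => hex D hDsub φ hφ)
  -- limit function on D
  have hL : ∀ d ∈ D, ∃ l : ℝ, Tendsto (fun k => g (φ₁ k) d) atTop (nhds l) := hconv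
  choose! L hLt using hL
  have hLB : ∀ d ∈ D, L d ∈ Icc (-B) B := by
    intro d hd
    have h1 : (-B : ℝ) ≤ L d :=
      le_of_tendsto_of_tendsto' tendsto_const_nhds (hLt d hd)
        (fun k => (abs_le.1 (hb (φ₁ k) d (hDsub hd))).1)
    have h2 : L d ≤ B :=
      le_of_tendsto' (hLt d hd) (fun k => (abs_le.1 (hb (φ₁ k) d (hDsub hd))).2)
    exact ⟨h1, h2⟩
  have hLmono : ∀ d ∈ D, ∀ d' ∈ D, d ≤ d' → L d ≤ L d' := by
    intro d hd d' hd' hdd'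
    exact le_of_tendsto_of_tendsto' (hLt d hd) (hLt d' hd')
      (fun k => hmono (φ₁ k) (hDsub hd) (hDsub hd') hdd')
  -- sup/inf envelopes
  set S : ℝ → ℝ := fun t => sSup (L '' {d ∈ D | d ≤ t}) with hSdef
  set I : ℝ → ℝ := fun t => sInf (L '' {d ∈ D | t ≤ d}) with hIdef
  have hSne : ∀ t ∈ Icc a b, ({d ∈ D | d ≤ t}).Nonempty := fun t ht => ⟨a, haD, ht.1⟩
  have hIne : ∀ t ∈ Icc a b, ({d ∈ D | t ≤ d}).Nonempty := fun t ht => ⟨b, hbD, ht.2⟩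
  have hSbdd : ∀ t : ℝ, BddAbove (L '' {d ∈ D | d ≤ t}) := by
    intro t
    refine ⟨B, ?_⟩
    rintro x ⟨d, ⟨hd, _⟩, rfl⟩
    exact (hLB d hd).2
  have hIbdd : ∀ t : ℝ, BddBelow (L '' {d ∈ D | t ≤ d}) := by
    intro t
    refine ⟨-B, ?_⟩
    rintro x ⟨d, ⟨hd, _⟩, rfl⟩
    exact (hLB d hd).1
  have hSI : ∀ t ∈ Icc a b, S t ≤ I t := by
    intro t ht
    apply csSup_le ((hSne t ht).image L)
    rintro x ⟨d, ⟨hd, hdt⟩, rfl⟩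
    apply le_csInf ((hIne t ht).image L)
    rintro y ⟨d', ⟨hd', htd'⟩, rfl⟩
    exact hLmono d hd d' hd' (hdt.trans htd')
  -- convergence at good points
  have hgood : ∀ t ∈ Icc a b, I t ≤ S t →
      Tendsto (fun k => g (φ₁ k) t) atTop (nhds (S t)) := by
    intro t ht heq
    rw [Metric.tendsto_atTop]
    intro ε hε
    have hε2 : 0 < ε/2 := by linarith
    obtain ⟨x, hx, hx2⟩ := exists_lt_of_lt_csSup ((hSne t ht).image L)
      (show S t - ε/2 < S t by linarith)
    obtain ⟨d₁, ⟨hd₁D, hd₁t⟩, rfl⟩ := hx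
    obtain ⟨y, hy, hy2⟩ := exists_lt_of_csInf_lt ((hIne t ht).image L)
      (show I t < I t + ε/2 by linarith)
    obtain ⟨d₂, ⟨hd₂D, htd₂⟩, rfl⟩ := hy
    have h1 := (hLt d₁ hd₁D).eventually (eventually_abs_sub_lt (L d₁) hε2)
    have h2 := (hLt d₂ hd₂D).eventually (eventually_abs_sub_lt (L d₂) hε2)
    obtain ⟨N, hN⟩ := (h1.and h2).exists_forall_of_atTop
    refine ⟨N, fun k hk => ?_⟩
    obtain ⟨e1, e2⟩ := hN k hk
    rw [Real.dist_eq]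
    have hm1 : g (φ₁ k) d₁ ≤ g (φ₁ k) t := hmono (φ₁ k) (hDsub hd₁D) ht hd₁t
    have hm2 : g (φ₁ k) t ≤ g (φ₁ k) d₂ := hmono (φ₁ k) ht (hDsub hd₂D) htd₂
    have a1 := abs_sub_lt_iff.1 e1
    have a2 := abs_sub_lt_iff.1 e2
    rw [abs_sub_lt_iff]
    constructor
    · -- g t - S t < ε : g t ≤ g d₂ < L d₂ + ε/2 < I t + ε ≤ S t + ε
      have : g (φ₁ k) d₂ < L d₂ + ε/2 := by linarith [a2.1]
      have : g (φ₁ k) t < I t + ε := by linarith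
      linarith
    · -- S t - g t < ε : g t ≥ g d₁ > L d₁ - ε/2 > S t - ε
      have : L d₁ - ε/2 < g (φ₁ k) d₁ := by linarith [a1.2]
      linarith
  -- bad set is countable
  set E : Set ℝ := {t | t ∈ Icc a b ∧ S t < I t} with hEdef
  have hEsub : E ⊆ Icc a b := fun t ht => ht.1
  have hEc : E.Countable := by
    have hq : ∀ t ∈ E, ∃ q : ℚ, S t < (q:ℝ) ∧ (q:ℝ) < I t := by
      intro t ht
      obtain ⟨q, hq1, hq2⟩ := exists_rat_btwn ht.2
      exact ⟨q, hq1, hq2⟩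
    choose! q hq1 hq2 using hq
    have hinj : Set.InjOn q E := by
      have key : ∀ t ∈ E, ∀ t' ∈ E, t < t' → (q t : ℝ) < q t' := by
        intro t ht t' ht' htt'
        obtain ⟨r, hr1, hr2⟩ := exists_rat_btwn htt'
        have hrD : (r:ℝ) ∈ D := Or.inl ⟨⟨ht.1.1.trans hr1.le, hr2.le.trans ht'.1.2⟩,
          ⟨r, rfl⟩⟩
        have hIr : I t ≤ L r := by
          apply csInf_le (hIbdd t)
          exact ⟨r, ⟨hrD, hr1.le⟩, rfl⟩
        have hrS : L r ≤ S t' := by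
          apply le_csSup (hSbdd t')
          exact ⟨r, ⟨hrD, hr2.le⟩, rfl⟩
        calc (q t : ℝ) < I t := hq2 t ht
        _ ≤ L ↑r := hIr
        _ ≤ S t' := hrS
        _ < q t' := hq1 t' ht'
      intro t ht t' ht' hqq
      by_contra hne
      rcases lt_or_gt_of_ne hne with h | h
      · exact absurd (congrArg (fun x : ℚ => (x:ℝ)) hqq) (ne_of_lt (key t ht t' ht' h))
      · exact absurd (congrArg (fun x : ℚ => (x:ℝ)) hqq.symm) (ne_of_lt (key t' ht' t ht h))
    exact Set.countable_of_injective_of_countable_image hinj (q '' E).to_countable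
  -- Step 3: further subsequence converging on E
  obtain ⟨ψ, hψ, hconvE⟩ := diag_countable hEc (fun x φ => P x (fun k => φ₁ (φ k)))
    (fun x φ ρ hρ hp => hsub x _ ρ hρ hp)
    (fun x φ N hp => htail x _ N hp)
    (fun φ hφ => hex E hEsub (fun k => φ₁ (φ k)) (hφ₁.comp hφ))
  refine ⟨fun k => φ₁ (ψ k), hφ₁.comp hψ, ?_⟩
  intro t ht
  by_cases htE : t ∈ E
  · exact hconvE t htE
  · have : ¬ S t < I t := fun h => htE ⟨ht, h⟩
    exact ⟨S t, (hgood t ht (not_lt.1 this)).comp hψ.tendsto_atTop⟩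

lemma weak_limit {H : Type*} [NormedAddCommGroup H] [InnerProductSpace ℝ H] [CompleteSpace H]
    {M0 : ℝ} (hM0 : 0 ≤ M0) {X0 : Set H} (hX0d : Dense X0)
    (a : ℕ → H) (ha : ∀ k, ‖a k‖ ≤ M0)
    (hconv : ∀ ξ ∈ X0, ∃ l : ℝ, Tendsto (fun k => (inner ℝ (a k) ξ : ℝ)) atTop (nhds l)) :
    ∃ y : H, ‖y‖ ≤ M0 ∧
      ∀ ξ : H, Tendsto (fun k => (inner ℝ (a k) ξ : ℝ)) atTop (nhds (inner ℝ y ξ)) := by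
  have hCS : ∀ (x : H) (k : ℕ), |(inner ℝ (a k) x : ℝ)| ≤ M0 * ‖x‖ := by
    intro x k
    calc |(inner ℝ (a k) x : ℝ)| ≤ ‖a k‖ * ‖x‖ := abs_real_inner_le_norm _ _
    _ ≤ M0 * ‖x‖ := mul_le_mul_of_nonneg_right (ha k) (norm_nonneg _)
  have hcauchy : ∀ ξ : H, CauchySeq (fun k => (inner ℝ (a k) ξ : ℝ)) := by
    intro ξ
    rw [Metric.cauchySeq_iff]
    intro ε hε
    have hden : (0:ℝ) < ε / (3 * (M0 + 1)) := by positivity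
    obtain ⟨ξ₀, hξ₀X, hξ₀d⟩ := hX0d.exists_dist_lt ξ hden
    obtain ⟨l, hl⟩ := hconv ξ₀ hξ₀X
    obtain ⟨N, hN⟩ := (Metric.cauchySeq_iff.1 hl.cauchySeq) (ε/3) (by linarith)
    refine ⟨N, fun m hm n hn => ?_⟩
    have h0 := hN m hm n hn
    rw [Real.dist_eq] at h0 ⊢
    have hd : ‖ξ - ξ₀‖ < ε / (3 * (M0 + 1)) := by
      rw [← dist_eq_norm]; exact hξ₀d
    have key : ∀ k : ℕ, |(inner ℝ (a k) ξ : ℝ) - inner ℝ (a k) ξ₀| ≤ M0 * ‖ξ - ξ₀‖ := by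
      intro k
      have : (inner ℝ (a k) ξ : ℝ) - inner ℝ (a k) ξ₀ = inner ℝ (a k) (ξ - ξ₀) := by
        rw [inner_sub_right]
      rw [this]
      exact hCS (ξ - ξ₀) k
    have hM : M0 * ‖ξ - ξ₀‖ ≤ M0 * (ε / (3 * (M0 + 1))) :=
      mul_le_mul_of_nonneg_left hd.le hM0
    have hfrac : M0 * (ε / (3 * (M0 + 1))) ≤ ε/3 := by
      rw [mul_div_assoc', div_le_div_iff₀ (by positivity) (by norm_num : (0:ℝ) < 3)]
      nlinarith
    have k1 := key m
    have k2 := key n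
    have : |(inner ℝ (a m) ξ : ℝ) - inner ℝ (a n) ξ| ≤
        |(inner ℝ (a m) ξ : ℝ) - inner ℝ (a m) ξ₀| + |(inner ℝ (a m) ξ₀ : ℝ) - inner ℝ (a n) ξ₀|
          + |(inner ℝ (a n) ξ₀ : ℝ) - inner ℝ (a n) ξ| := by
      have := abs_sub_le ((inner ℝ (a m) ξ : ℝ)) ((inner ℝ (a m) ξ₀ : ℝ)) ((inner ℝ (a n) ξ : ℝ))
      have h2 := abs_sub_le ((inner ℝ (a m) ξ₀ : ℝ)) ((inner ℝ (a n) ξ₀ : ℝ)) ((inner ℝ (a n) ξ : ℝ))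
      linarith
    have k3 : |(inner ℝ (a n) ξ₀ : ℝ) - inner ℝ (a n) ξ| ≤ M0 * ‖ξ - ξ₀‖ := by
      rw [abs_sub_comm]; exact key n
    linarith
  have hlim : ∀ ξ : H, ∃ l : ℝ, Tendsto (fun k => (inner ℝ (a k) ξ : ℝ)) atTop (nhds l) :=
    fun ξ => cauchySeq_tendsto_of_complete (hcauchy ξ)
  choose Λ hΛ using hlim
  have hΛbd : ∀ ξ : H, ‖Λ ξ‖ ≤ M0 * ‖ξ‖ := by
    intro ξ
    rw [Real.norm_eq_abs]
    exact le_of_tendsto' (hΛ ξ).abs (fun k => hCS ξ k)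
  have hadd : ∀ ξ η : H, Λ (ξ + η) = Λ ξ + Λ η := by
    intro ξ η
    have h1 : Tendsto (fun k => (inner ℝ (a k) ξ : ℝ) + inner ℝ (a k) η) atTop
        (nhds (Λ ξ + Λ η)) := (hΛ ξ).add (hΛ η)
    have h2 : (fun k => (inner ℝ (a k) ξ : ℝ) + inner ℝ (a k) η)
        = fun k => (inner ℝ (a k) (ξ + η) : ℝ) := by
      funext k; rw [inner_add_right]
    rw [h2] at h1
    exact tendsto_nhds_unique (hΛ (ξ + η)) h1
  have hsmul : ∀ (c : ℝ) (ξ : H), Λ (c • ξ) = c * Λ ξ := by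
    intro c ξ
    have h1 : Tendsto (fun k => c * (inner ℝ (a k) ξ : ℝ)) atTop (nhds (c * Λ ξ)) :=
      (hΛ ξ).const_mul c
    have h2 : (fun k => c * (inner ℝ (a k) ξ : ℝ)) = fun k => (inner ℝ (a k) (c • ξ) : ℝ) := by
      funext k; rw [real_inner_smul_right]
    rw [h2] at h1
    exact tendsto_nhds_unique (hΛ (c • ξ)) h1
  let Lmap : H →ₗ[ℝ] ℝ :=
    { toFun := Λ
      map_add' := hadd
      map_smul' := hsmul }
  let Lc : H →L[ℝ] ℝ := Lmap.mkContinuous M0 hΛbd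
  set y : H := (InnerProductSpace.toDual ℝ H).symm Lc with hy
  have hyval : ∀ ξ : H, (inner ℝ y ξ : ℝ) = Λ ξ := by
    intro ξ
    exact InnerProductSpace.toDual_symm_apply
  have hynorm : ‖y‖ ≤ M0 := by
    rw [hy, LinearIsometryEquiv.norm_map]
    exact Lmap.mkContinuous_norm_le hM0 hΛbd
  refine ⟨y, hynorm, fun ξ => ?_⟩
  rw [hyval ξ]
  exact hΛ ξ

lemma extract_one {T1 T1' C B : ℝ} (hT : T1 ≤ T1') (h : ℕ → ℝ → ℝ)
    (hvar : ∀ n, eVariationOn (h n) (Icc T1 T1') ≤ ENNReal.ofReal C)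
    (hb : ∀ n, ∀ t ∈ Icc T1 T1', |h n t| ≤ B) :
    ∃ ψ : ℕ → ℕ, StrictMono ψ ∧ ∀ t ∈ Icc T1 T1',
      ∃ l : ℝ, Tendsto (fun k => h (ψ k) t) atTop (nhds l) := by
  set s : Set ℝ := Icc T1 T1' with hs
  have hT1s : T1 ∈ s := ⟨le_refl _, hT⟩
  have hvar' : ∀ n, eVariationOn (h n) s ≤ ENNReal.ofReal |C| :=
    fun n => (hvar n).trans (ENNReal.ofReal_le_ofReal (le_abs_self C))
  have hbv : ∀ n, BoundedVariationOn (h n) s :=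
    fun n => (lt_of_le_of_lt (hvar' n) ENNReal.ofReal_lt_top).ne
  have hlbv : ∀ n, LocallyBoundedVariationOn (h n) s :=
    fun n => (hbv n).locallyBoundedVariationOn
  set p : ℕ → ℝ → ℝ := fun n => variationOnFromTo (h n) s T1 with hp
  have hpmono : ∀ n, MonotoneOn (p n) s := fun n => variationOnFromTo.monotoneOn (hlbv n) hT1s
  have hpb : ∀ n, ∀ t ∈ s, |p n t| ≤ |C| := by
    intro n t ht
    have h0 : 0 ≤ p n t := variationOnFromTo.nonneg_of_le (h n) s ht.1
    have h1 : p n t = (eVariationOn (h n) (s ∩ Icc T1 t)).toReal :=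
      variationOnFromTo.eq_of_le (h n) s ht.1
    have h2 : (eVariationOn (h n) (s ∩ Icc T1 t)).toReal ≤ (ENNReal.ofReal |C|).toReal :=
      ENNReal.toReal_mono ENNReal.ofReal_ne_top
        (((eVariationOn.mono (h n)) inter_subset_left).trans (hvar' n))
    rw [ENNReal.toReal_ofReal (abs_nonneg C)] at h2
    rw [abs_of_nonneg h0, h1]
    exact h2
  set q : ℕ → ℝ → ℝ := fun n => variationOnFromTo (h n) s T1 - h n with hq
  have hqmono : ∀ n, MonotoneOn (q n) s :=
    fun n => variationOnFromTo.sub_self_monotoneOn (hlbv n) hT1s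
  have hqb : ∀ n, ∀ t ∈ s, |q n t| ≤ |C| + B := by
    intro n t ht
    have : q n t = p n t - h n t := rfl
    rw [this]
    calc |p n t - h n t| ≤ |p n t| + |h n t| := abs_sub _ _
    _ ≤ |C| + B := add_le_add (hpb n t ht) (hb n t ht)
  obtain ⟨ψ₁, hψ₁, hconv₁⟩ := helly_mono p hpmono hpb
  obtain ⟨ψ₂, hψ₂, hconv₂⟩ := helly_mono (fun n => q (ψ₁ n))
    (fun n => hqmono (ψ₁ n)) (fun n => hqb (ψ₁ n))
  refine ⟨fun k => ψ₁ (ψ₂ k), hψ₁.comp hψ₂, ?_⟩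
  intro t ht
  obtain ⟨l₁, hl₁⟩ := hconv₁ t ht
  obtain ⟨l₂, hl₂⟩ := hconv₂ t ht
  refine ⟨l₁ - l₂, ?_⟩
  have hsub : (fun k => h (ψ₁ (ψ₂ k)) t)
      = fun k => p (ψ₁ (ψ₂ k)) t - q (ψ₁ (ψ₂ k)) t := by
    funext k
    show h (ψ₁ (ψ₂ k)) t = p (ψ₁ (ψ₂ k)) t - (p (ψ₁ (ψ₂ k)) t - h (ψ₁ (ψ₂ k)) t)
    ring
  rw [hsub]
  exact ((hl₁.comp hψ₂.tendsto_atTop).sub hl₂)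

/-- Helly + diagonal argument, Lemma 3.2 core: from a bounded sequence
`fₙ : [T₁,T₁'] → H` whose pairings with a countable dense set have uniformly bounded
variation, one can extract a subsequence converging weakly in `H` pointwise in time. -/
theorem stmt9 {H : Type*} [NormedAddCommGroup H] [InnerProductSpace ℝ H] [CompleteSpace H]
    (T1 T1' M0 : ℝ) (X0 : Set H) (hX0c : X0.Countable) (hX0d : Dense X0)
    (f : ℕ → ℝ → H)
    (hbd : ∀ n : ℕ, ∀ t ∈ Set.Icc T1 T1', ‖f n t‖ ≤ M0)
    (hvar : ∀ ξ ∈ X0, ∃ C : ℝ, ∀ n : ℕ,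
      eVariationOn (fun t => (inner ℝ (f n t) ξ : ℝ)) (Set.Icc T1 T1') ≤ ENNReal.ofReal C) :
    ∃ φ : ℕ → ℕ, StrictMono φ ∧ ∃ g : ℝ → H,
      (∀ t ∈ Set.Icc T1 T1', ‖g t‖ ≤ M0) ∧
      ∀ ξ : H, ∀ t ∈ Set.Icc T1 T1',
        Filter.Tendsto (fun k => (inner ℝ (f (φ k) t) ξ : ℝ)) Filter.atTop
          (nhds (inner ℝ (g t) ξ)) := by
  rcases le_or_gt T1 T1' with hT | hT
  swap
  · refine ⟨id, strictMono_id, 0, ?_, ?_⟩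
    · intro t ht; exact absurd (ht.1.trans ht.2) (not_le.2 hT)
    · intro ξ t ht; exact absurd (ht.1.trans ht.2) (not_le.2 hT)
  have hM0 : 0 ≤ M0 := (norm_nonneg _).trans (hbd 0 T1 ⟨le_refl _, hT⟩)
  have hne : X0.Nonempty := hX0d.nonempty
  obtain ⟨u, hu⟩ := hX0c.exists_eq_range hne
  have huX0 : ∀ m, u m ∈ X0 := fun m => hu ▸ Set.mem_range_self m
  set P : ℕ → (ℕ → ℕ) → Prop := fun m φ => ∀ t ∈ Set.Icc T1 T1',
    ∃ l : ℝ, Tendsto (fun k => (inner ℝ (f (φ k) t) (u m) : ℝ)) atTop (nhds l) with hPdef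
  have hsub : ∀ m (φ ψ : ℕ → ℕ), StrictMono ψ → P m φ → P m (fun k => φ (ψ k)) := by
    intro m φ ψ hψ hp t ht
    obtain ⟨l, hl⟩ := hp t ht
    exact ⟨l, hl.comp hψ.tendsto_atTop⟩
  have htail : ∀ m (φ : ℕ → ℕ) (N : ℕ), P m (fun k => φ (k + N)) → P m φ := by
    intro m φ N hp t ht
    obtain ⟨l, hl⟩ := hp t ht
    exact ⟨l, (tendsto_add_atTop_iff_nat N).1 hl⟩
  have hex : ∀ φ : ℕ → ℕ, StrictMono φ → ∀ m, ∃ ψ, StrictMono ψ ∧ P m (fun k => φ (ψ k)) := by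
    intro φ hφ m
    obtain ⟨C, hC⟩ := hvar (u m) (huX0 m)
    obtain ⟨ψ, hψ, hconv⟩ := extract_one (B := M0 * ‖u m‖) hT
      (fun n t => (inner ℝ (f (φ n) t) (u m) : ℝ))
      (fun n => hC (φ n))
      (by
        intro n t ht
        calc |(inner ℝ (f (φ n) t) (u m) : ℝ)| ≤ ‖f (φ n) t‖ * ‖u m‖ :=
          abs_real_inner_le_norm _ _
        _ ≤ M0 * ‖u m‖ := mul_le_mul_of_nonneg_right (hbd (φ n) t ht) (norm_nonneg _))
    exact ⟨ψ, hψ, hconv⟩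
  obtain ⟨φ, hφ, hP⟩ := diag_nat P hsub htail hex
  have key : ∀ t ∈ Set.Icc T1 T1', ∃ y : H, ‖y‖ ≤ M0 ∧
      ∀ ξ : H, Tendsto (fun k => (inner ℝ (f (φ k) t) ξ : ℝ)) atTop (nhds (inner ℝ y ξ)) := by
    intro t ht
    apply weak_limit hM0 hX0d (fun k => f (φ k) t) (fun k => hbd (φ k) t ht)
    intro ξ hξ
    have : ξ ∈ Set.range u := hu ▸ hξ
    obtain ⟨m, rfl⟩ := this
    exact hP m t ht
  refine ⟨φ, hφ, fun t => if h : t ∈ Set.Icc T1 T1' then (key t h).choose else 0, ?_, ?_⟩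
  · intro t ht
    simp only [dif_pos ht]
    exact (key t ht).choose_spec.1
  · intro ξ t ht
    simp only [dif_pos ht]
    exact (key t ht).choose_spec.2 ξ
end

section
/- (Helly selection theorem) Let $(f_n)$ be a sequence of real-valued functions on a compact interval $[a,b]$ such that $\sup_n \left(\sup_{t}|f_n(t)| + \mathrm{Var}_{[a,b]}(f_n)\right) < \infty$. Then there is a subsequence $(f_{n_k})$ and a function $f$ of bounded variation on $[a,b]$ such that $f_{n_k}(t)\to f(t)$ for every $t\in[a,b]$. -/
open Set Filter Topology

/-- Diagonal-type extraction: a uniformly bounded sequence of functions has a subsequence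
converging pointwise on a given countable set. -/
lemma helly_subseq_countable (D : Set ℝ) (hD : D.Countable) (u : ℕ → ℝ → ℝ) (C : ℝ)
    (hb : ∀ n, ∀ t ∈ D, |u n t| ≤ C) :
    ∃ φ : ℕ → ℕ, StrictMono φ ∧ ∀ t ∈ D, ∃ l,
      Tendsto (fun k => u (φ k) t) atTop (𝓝 l) := by
  rcases D.eq_empty_or_nonempty with h | h
  · exact ⟨id, strictMono_id, by simp [h]⟩
  obtain ⟨e, he⟩ := hD.exists_eq_range h
  have hcomp : IsCompact (Set.pi univ fun _ : ℕ => Icc (-C) C) :=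
    isCompact_univ_pi fun _ => isCompact_Icc
  have hmem : ∀ n, (fun i => u n (e i)) ∈ Set.pi univ fun _ : ℕ => Icc (-C) C := by
    intro n
    rw [Set.mem_univ_pi]
    intro i
    have := hb n (e i) (he ▸ Set.mem_range_self i)
    exact abs_le.1 this
  obtain ⟨l, -, φ, hφ, hconv⟩ := hcomp.tendsto_subseq hmem
  refine ⟨φ, hφ, ?_⟩
  intro t ht
  rw [he] at ht
  obtain ⟨i, rfl⟩ := ht
  exact ⟨l i, (tendsto_pi_nhds.1 hconv) i⟩

/-- Helly's selection theorem for a uniformly bounded sequence of monotone functions. -/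
lemma helly_monotone (a b : ℝ) (u : ℕ → ℝ → ℝ) (C : ℝ)
    (hmono : ∀ n, MonotoneOn (u n) (Icc a b))
    (hb : ∀ n, ∀ t ∈ Icc a b, |u n t| ≤ C) :
    ∃ φ : ℕ → ℕ, StrictMono φ ∧ ∀ t ∈ Icc a b, ∃ l,
      Tendsto (fun k => u (φ k) t) atTop (𝓝 l) := by
  rcases le_or_gt a b with hab | hab
  swap
  · exact ⟨id, strictMono_id, by simp [Set.Icc_eq_empty_of_lt hab]⟩
  classical
  set D : Set ℝ := insert a (insert b (Set.range ((↑) : ℚ → ℝ) ∩ Icc a b)) with hDdef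
  have haD : a ∈ D := Set.mem_insert _ _
  have hbD : b ∈ D := Set.mem_insert_of_mem _ (Set.mem_insert _ _)
  have hDsub : D ⊆ Icc a b := by
    intro t ht
    rcases ht with rfl | ht
    · exact Set.left_mem_Icc.2 hab
    rcases ht with rfl | ht
    · exact Set.right_mem_Icc.2 hab
    · exact ht.2
  have hDc : D.Countable :=
    (((Set.countable_range _).mono Set.inter_subset_left).insert b).insert a
  obtain ⟨φ₁, hφ₁, hconv₁⟩ := helly_subseq_countable D hDc u C
    (fun n t ht => hb n t (hDsub ht))
  set G : ℝ → ℝ := fun q => limUnder atTop (fun k => u (φ₁ k) q) with hGdef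
  have hG : ∀ q ∈ D, Tendsto (fun k => u (φ₁ k) q) atTop (𝓝 (G q)) := by
    intro q hq
    obtain ⟨l, hl⟩ := hconv₁ q hq
    rwa [show G q = l from hl.limUnder_eq]
  have hGb : ∀ q ∈ D, G q ∈ Icc (-C) C := by
    intro q hq
    constructor
    · exact ge_of_tendsto (hG q hq)
        (Eventually.of_forall fun k => (abs_le.1 (hb _ q (hDsub hq))).1)
    · exact le_of_tendsto (hG q hq)
        (Eventually.of_forall fun k => (abs_le.1 (hb _ q (hDsub hq))).2)
  have hGm : ∀ q ∈ D, ∀ r ∈ D, q ≤ r → G q ≤ G r := by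
    intro q hq r hr hqr
    exact le_of_tendsto_of_tendsto' (hG q hq) (hG r hr)
      (fun k => hmono _ (hDsub hq) (hDsub hr) hqr)
  set S : ℝ → Set ℝ := fun t => G '' {q ∈ D | q ≤ t} with hSdef
  set T : ℝ → Set ℝ := fun t => G '' {q ∈ D | t ≤ q} with hTdef
  set L : ℝ → ℝ := fun t => sSup (S t) with hLdef
  set U : ℝ → ℝ := fun t => sInf (T t) with hUdef
  have hSne : ∀ t ∈ Icc a b, (S t).Nonempty :=
    fun t ht => ⟨G a, Set.mem_image_of_mem _ ⟨haD, ht.1⟩⟩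
  have hTne : ∀ t ∈ Icc a b, (T t).Nonempty :=
    fun t ht => ⟨G b, Set.mem_image_of_mem _ ⟨hbD, ht.2⟩⟩
  have hSbdd : ∀ t, BddAbove (S t) := by
    intro t
    refine ⟨C, ?_⟩
    rintro x ⟨q, hq, rfl⟩
    exact (hGb q hq.1).2
  have hTbdd : ∀ t, BddBelow (T t) := by
    intro t
    refine ⟨-C, ?_⟩
    rintro x ⟨q, hq, rfl⟩
    exact (hGb q hq.1).1
  have hLU : ∀ t ∈ Icc a b, L t ≤ U t := by
    intro t ht
    apply csSup_le (hSne t ht)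
    rintro x ⟨q, hq, rfl⟩
    apply le_csInf (hTne t ht)
    rintro y ⟨r, hr, rfl⟩
    exact hGm q hq.1 r hr.1 (hq.2.trans hr.2)
  -- the bad set where left and right limits differ is countable
  set B : Set ℝ := {t ∈ Icc a b | L t < U t} with hBdef
  have hUleG : ∀ t, ∀ q ∈ D, t ≤ q → U t ≤ G q :=
    fun t q hq htq => csInf_le (hTbdd t) (Set.mem_image_of_mem _ ⟨hq, htq⟩)
  have hGleL : ∀ t, ∀ q ∈ D, q ≤ t → G q ≤ L t :=
    fun t q hq hqt => le_csSup (hSbdd t) (Set.mem_image_of_mem _ ⟨hq, hqt⟩)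
  have hsep : ∀ t ∈ B, ∀ t' ∈ B, t < t' → U t ≤ L t' := by
    intro t ht t' ht' htt'
    obtain ⟨q, hq1, hq2⟩ := exists_rat_btwn htt'
    have hqD : (q : ℝ) ∈ D := by
      refine Set.mem_insert_of_mem _ (Set.mem_insert_of_mem _ ⟨⟨q, rfl⟩, ?_, ?_⟩)
      · exact ht.1.1.trans hq1.le
      · exact hq2.le.trans ht'.1.2
    exact (hUleG t _ hqD hq1.le).trans (hGleL t' _ hqD hq2.le)
  have hrq : ∀ t ∈ B, ∃ q : ℚ, L t < (q : ℝ) ∧ (q : ℝ) < U t :=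
    fun t ht => exists_rat_btwn ht.2
  set rq : ℝ → ℚ := fun t => if h : t ∈ B then (hrq t h).choose else 0 with hrqdef
  have hrqmem : ∀ t ∈ B, L t < (rq t : ℝ) ∧ ((rq t : ℝ)) < U t := by
    intro t ht
    simp only [hrqdef, dif_pos ht]
    exact (hrq t ht).choose_spec
  have hrqmono : ∀ t ∈ B, ∀ t' ∈ B, t < t' → (rq t : ℝ) < (rq t' : ℝ) := by
    intro t ht t' ht' htt'
    calc (rq t : ℝ) < U t := (hrqmem t ht).2
    _ ≤ L t' := hsep t ht t' ht' htt'
    _ < (rq t' : ℝ) := (hrqmem t' ht').1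
  have hBc : B.Countable := by
    have hinj : Set.InjOn rq B := by
      intro x hx y hy hxy
      rcases lt_trichotomy x y with h | h | h
      · exact absurd (congrArg ((↑) : ℚ → ℝ) hxy) (ne_of_lt (hrqmono x hx y hy h))
      · exact h
      · exact absurd (congrArg ((↑) : ℚ → ℝ) hxy) (ne_of_gt (hrqmono y hy x hx h))
    exact (Set.mapsTo_univ rq B).countable_of_injOn hinj Set.countable_univ
  obtain ⟨φ₂, hφ₂, hconv₂⟩ := helly_subseq_countable B hBc (fun n => u (φ₁ n)) C
    (fun n t ht => hb _ t ht.1)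
  refine ⟨φ₁ ∘ φ₂, hφ₁.comp hφ₂, ?_⟩
  intro t ht
  by_cases htB : t ∈ B
  · exact hconv₂ t htB
  -- squeeze argument at points where L t = U t
  have hLUeq : L t = U t := by
    by_contra hne
    exact htB ⟨ht, lt_of_le_of_ne (hLU t ht) hne⟩
  refine ⟨L t, tendsto_order.2 ⟨?_, ?_⟩⟩
  · intro c hc
    obtain ⟨x, ⟨q, hq, rfl⟩, hx⟩ := exists_lt_of_lt_csSup (hSne t ht) hc
    have htend : Tendsto (fun k => u (φ₁ (φ₂ k)) q) atTop (𝓝 (G q)) :=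
      (hG q hq.1).comp hφ₂.tendsto_atTop
    filter_upwards [htend.eventually (eventually_gt_nhds hx)] with k hk
    exact hk.trans_le (hmono _ (hDsub hq.1) ht hq.2)
  · intro c hc
    rw [hLUeq] at hc
    obtain ⟨x, ⟨q, hq, rfl⟩, hx⟩ := exists_lt_of_csInf_lt (hTne t ht) hc
    have htend : Tendsto (fun k => u (φ₁ (φ₂ k)) q) atTop (𝓝 (G q)) :=
      (hG q hq.1).comp hφ₂.tendsto_atTop
    filter_upwards [htend.eventually (eventually_lt_nhds hx)] with k hk
    exact (hmono _ ht (hDsub hq.1) hq.2).trans_lt hk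

/-- Helly's selection theorem. A sequence of real functions on `[a,b]`,
uniformly bounded together with their total variations, has a subsequence converging
pointwise on `[a,b]` to a function of bounded variation. -/
theorem stmt10 (a b : ℝ) (f : ℕ → ℝ → ℝ) (C : ℝ)
    (hbd : ∀ n : ℕ, (∀ t ∈ Set.Icc a b, |f n t| ≤ C) ∧
      eVariationOn (f n) (Set.Icc a b) ≤ ENNReal.ofReal C) :
    ∃ φ : ℕ → ℕ, StrictMono φ ∧ ∃ g : ℝ → ℝ,
      BoundedVariationOn g (Set.Icc a b) ∧
      ∀ t ∈ Set.Icc a b, Filter.Tendsto (fun k => f (φ k) t) Filter.atTop (nhds (g t)) := by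
  classical
  rcases le_or_gt a b with hab | hab
  swap
  · refine ⟨id, strictMono_id, 0, ?_, by simp [Set.Icc_eq_empty_of_lt hab]⟩
    unfold BoundedVariationOn
    rw [Set.Icc_eq_empty_of_lt hab, eVariationOn.subsingleton _ Set.subsingleton_empty]
    exact ENNReal.zero_ne_top
  have hC0 : 0 ≤ C := (abs_nonneg _).trans ((hbd 0).1 a (Set.left_mem_Icc.2 hab))
  -- the running variation
  set v : ℕ → ℝ → ℝ := fun n t => (eVariationOn (f n) (Icc a t)).toReal with hvdef
  have hvle : ∀ n, ∀ t ∈ Icc a b, eVariationOn (f n) (Icc a t) ≤ ENNReal.ofReal C :=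
    fun n t ht => le_trans (eVariationOn.mono _ (Set.Icc_subset_Icc_right ht.2)) (hbd n).2
  have hvfin : ∀ n, ∀ t ∈ Icc a b, eVariationOn (f n) (Icc a t) ≠ ⊤ :=
    fun n t ht => ne_top_of_le_ne_top ENNReal.ofReal_ne_top (hvle n t ht)
  have hvbd : ∀ n, ∀ t ∈ Icc a b, |v n t| ≤ C := by
    intro n t ht
    have h1 : v n t ≤ C := by
      have := ENNReal.toReal_mono ENNReal.ofReal_ne_top (hvle n t ht)
      rwa [ENNReal.toReal_ofReal hC0] at this
    have h2 : 0 ≤ v n t := ENNReal.toReal_nonneg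
    rw [abs_le]
    exact ⟨by linarith, h1⟩
  -- key additivity estimate: for s ≤ t, v n t - v n s ≥ |f n t - f n s|
  have hkey : ∀ n, ∀ s ∈ Icc a b, ∀ t ∈ Icc a b, s ≤ t →
      |f n t - f n s| ≤ v n t - v n s := by
    intro n s hs t ht hst
    have hadd := eVariationOn.Icc_add_Icc (f n) (s := (univ : Set ℝ)) hs.1 hst (Set.mem_univ s)
    simp only [Set.univ_inter] at hadd
    have hfin1 : eVariationOn (f n) (Icc a s) ≠ ⊤ := hvfin n s hs
    have hfin2 : eVariationOn (f n) (Icc s t) ≠ ⊤ := by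
      refine ne_top_of_le_ne_top (hvfin n t ht) (eVariationOn.mono _ ?_)
      exact Set.Icc_subset_Icc_left hs.1
    have hvt : v n t = v n s + (eVariationOn (f n) (Icc s t)).toReal := by
      rw [hvdef]
      simp only
      rw [← hadd, ENNReal.toReal_add hfin1 hfin2]
    have hedist : edist (f n t) (f n s) ≤ eVariationOn (f n) (Icc s t) :=
      eVariationOn.edist_le (f n) (Set.right_mem_Icc.2 hst) (Set.left_mem_Icc.2 hst)
    have hdist : |f n t - f n s| ≤ (eVariationOn (f n) (Icc s t)).toReal := by
      have := ENNReal.toReal_mono hfin2 hedist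
      rwa [edist_dist, ENNReal.toReal_ofReal dist_nonneg, Real.dist_eq] at this
    linarith
  have hvmono : ∀ n, MonotoneOn (v n) (Icc a b) := by
    intro n s hs t ht hst
    exact ENNReal.toReal_mono (hvfin n t ht)
      (eVariationOn.mono _ (Set.Icc_subset_Icc_right hst))
  -- w = v - f is also monotone
  set w : ℕ → ℝ → ℝ := fun n t => v n t - f n t with hwdef
  have hwmono : ∀ n, MonotoneOn (w n) (Icc a b) := by
    intro n s hs t ht hst
    have := hkey n s hs t ht hst
    have habs := abs_le.1 this
    simp only [hwdef]
    linarith [habs.1]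
  have hwbd : ∀ n, ∀ t ∈ Icc a b, |w n t| ≤ C + C := by
    intro n t ht
    have h1 := hvbd n t ht
    have h2 := (hbd n).1 t ht
    calc |w n t| ≤ |v n t| + |f n t| := abs_sub _ _
    _ ≤ C + C := add_le_add h1 h2
  obtain ⟨φ₁, hφ₁, hconv₁⟩ := helly_monotone a b v C hvmono hvbd
  obtain ⟨φ₂, hφ₂, hconv₂⟩ := helly_monotone a b (fun n => w (φ₁ n)) (C + C)
    (fun n => hwmono (φ₁ n)) (fun n => hwbd (φ₁ n))
  set φ : ℕ → ℕ := φ₁ ∘ φ₂ with hφdef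
  have hφsm : StrictMono φ := hφ₁.comp hφ₂
  have hconv : ∀ t ∈ Icc a b, ∃ l, Tendsto (fun k => f (φ k) t) atTop (𝓝 l) := by
    intro t ht
    obtain ⟨l₁, hl₁⟩ := hconv₁ t ht
    obtain ⟨l₂, hl₂⟩ := hconv₂ t ht
    refine ⟨l₁ - l₂, ?_⟩
    have hl₁' : Tendsto (fun k => v (φ₁ (φ₂ k)) t) atTop (𝓝 l₁) :=
      hl₁.comp hφ₂.tendsto_atTop
    have heq : (fun k => f (φ k) t) = fun k => v (φ₁ (φ₂ k)) t - w (φ₁ (φ₂ k)) t := by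
      funext k
      simp [hwdef, hφdef]
    rw [heq]
    exact hl₁'.sub hl₂
  set g : ℝ → ℝ := fun t => limUnder atTop (fun k => f (φ k) t) with hgdef
  have hg : ∀ t ∈ Icc a b, Tendsto (fun k => f (φ k) t) atTop (𝓝 (g t)) := by
    intro t ht
    obtain ⟨l, hl⟩ := hconv t ht
    rwa [show g t = l from hl.limUnder_eq]
  refine ⟨φ, hφsm, g, ?_, hg⟩
  unfold BoundedVariationOn
  intro htop
  have hlt : ENNReal.ofReal C < eVariationOn g (Icc a b) := by
    rw [htop]; exact ENNReal.ofReal_lt_top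
  have := eVariationOn.lowerSemicontinuous_aux hg hlt
  obtain ⟨k, hk⟩ := this.exists
  exact absurd (hbd (φ k)).2 (not_le.2 hk)
end
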